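/- Fix a seed set S ⊆ V and a finite candidate edge set E_C ⊆ (S × V) ∖ E with probabilities p_e ∈ [0,1]. Then the augmented influence spread is submodular in the added edge set: for all A ⊆ B ⊆ E_C and every e ∈ E_C ∖ B, σ(A ∪ {e}, S) − σ(A, S) ≥ σ(B ∪ {e}, S) − σ(B, S). -/

import Mathlib

open scoped Classical

noncomputable section

/-- The set of nodes reachable from some node of `S` via edges of `g`
(every node reaches itself). -/
def Reach {V : Type*} (S : Finset V) (g : Finset (V × V)) : Set V :=
  {x | ∃ s ∈ S, Relation.ReflTransGen (fun a b => (a, b) ∈ g) s x}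

/-- Probability of the live-edge graph `g ⊆ F`. -/
def liveProb {V : Type*} [DecidableEq V] (F : Finset (V × V)) (p : V × V → ℝ)
    (g : Finset (V × V)) : ℝ :=
  (∏ e ∈ g, p e) * ∏ e ∈ F \ g, (1 - p e)

/-- The expected spread of the seed set `S` over live-edge graphs of edge set `F`;
the augmented influence spread is `σ(A, S) = expSpread (E ∪ A) p S`. -/
def expSpread {V : Type*} [DecidableEq V] (F : Finset (V × V)) (p : V × V → ℝ)
    (S : Finset V) : ℝ :=
  ∑ g ∈ F.powerset, liveProb F p g * ((Reach S g).ncard : ℝ)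

/-!
Adding an edge `e = (s, v)` with `s ∈ S` to a live-edge graph `g` gains exactly the nodes reachable
from `v` but not from `S` in `g`. Further live edges leaving `S` can only shrink this set, so the
gain is antitone in `g` along such edges. Since `E ∪ B` splits as `(E ∪ A) ∪ (B \ A)` with
independent coins on the two parts, the expected gain over `E ∪ B` averages, for each live-edge
graph `g` of `E ∪ A`, the gains at `g ∪ h` over live `h ⊆ B \ A`, each at most the gain at `g`.
-/

namespace Reach

variable {V : Type*} {S : Finset V} {g h : Finset (V × V)}

theorem mono (hgh : g ⊆ h) : Reach S g ⊆ Reach S h :=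
  fun _ ⟨s, hs, hsx⟩ => ⟨s, hs, Relation.ReflTransGen.mono (fun _ _ hab => hgh hab) _ _ hsx⟩

theorem subset_union_image_snd : Reach S g ⊆ ↑S ∪ Prod.snd '' (g : Set (V × V)) := by
  rintro x ⟨s, hs, hsx⟩
  rcases hsx.cases_tail with rfl | ⟨b, -, hbx⟩
  · exact Or.inl hs
  · exact Or.inr ⟨(b, x), hbx, rfl⟩

theorem finite (S : Finset V) (g : Finset (V × V)) : (Reach S g).Finite :=
  (S.finite_toSet.union (g.finite_toSet.image Prod.snd)).subset subset_union_image_snd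

variable [DecidableEq V]

theorem insert_of_fst_mem {e : V × V} (he : e.1 ∈ S) :
    Reach S (insert e g) = Reach S g ∪ Reach {e.2} g := by
  ext x
  constructor
  · rintro ⟨s, hs, hsx⟩
    induction hsx with
    | refl => exact Or.inl ⟨s, hs, .refl⟩
    | @tail b c _ hbc ih =>
      rcases Finset.mem_insert.1 hbc with rfl | hbc
      · exact Or.inr ⟨c, Finset.mem_singleton_self _, .refl⟩
      · rcases ih with ⟨t, ht, htb⟩ | ⟨t, ht, htb⟩
        · exact Or.inl ⟨t, ht, htb.tail hbc⟩
        · exact Or.inr ⟨t, ht, htb.tail hbc⟩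
  · rintro (hx | hx)
    · exact mono (Finset.subset_insert e g) hx
    · obtain ⟨t, ht, htx⟩ := hx
      rw [Finset.mem_singleton.1 ht] at htx
      exact ⟨e.1, he, .head (Finset.mem_insert_self e g)
        (Relation.ReflTransGen.mono (fun _ _ hab => Finset.mem_insert_of_mem hab) _ _ htx)⟩

/-- A path from `v` in `g ∪ h` that avoids `Reach S (g ∪ h)` never uses an edge of `h`, since
those all start in `S`. -/
theorem singleton_diff_union_subset (v : V) (hh : ∀ a ∈ h, a.1 ∈ S) :
    Reach {v} (g ∪ h) \ Reach S (g ∪ h) ⊆ Reach {v} g \ Reach S g := by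
  rintro x ⟨⟨w, hw, hwx⟩, hx⟩
  refine ⟨?_, fun hxS => hx (mono Finset.subset_union_left hxS)⟩
  induction hwx with
  | refl => exact ⟨w, hw, .refl⟩
  | @tail b c hwb hbc ih =>
    have hb : b ∉ Reach S (g ∪ h) := fun ⟨t, ht, htb⟩ => hx ⟨t, ht, htb.tail hbc⟩
    rcases Finset.mem_union.1 hbc with hbc | hbc
    · obtain ⟨t, ht, htb⟩ := ih hb
      exact ⟨t, ht, htb.tail hbc⟩
    · exact absurd ⟨b, hh _ hbc, .refl⟩ hb

end Reach

section MarginalGain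

variable {V : Type*} [DecidableEq V]

def marginalGain (S : Finset V) (e : V × V) (g : Finset (V × V)) : ℝ :=
  ((Reach S (insert e g)).ncard : ℝ) - (Reach S g).ncard

theorem marginalGain_eq_ncard {S : Finset V} {e : V × V} (he : e.1 ∈ S) (g : Finset (V × V)) :
    marginalGain S e g = (Reach {e.2} g \ Reach S g).ncard := by
  rw [marginalGain, Reach.insert_of_fst_mem he, ← Set.union_sdiff_self,
    Set.ncard_union_eq Set.disjoint_sdiff_right (Reach.finite _ _) ((Reach.finite _ _).sdiff),
    Nat.cast_add, add_sub_cancel_left]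

theorem marginalGain_union_le {S : Finset V} {e : V × V} (he : e.1 ∈ S)
    {g h : Finset (V × V)} (hh : ∀ a ∈ h, a.1 ∈ S) :
    marginalGain S e (g ∪ h) ≤ marginalGain S e g := by
  rw [marginalGain_eq_ncard he, marginalGain_eq_ncard he]
  exact_mod_cast Set.ncard_le_ncard (Reach.singleton_diff_union_subset e.2 hh)
    (Reach.finite _ _).sdiff

end MarginalGain

section LiveExpect

variable {V : Type*} [DecidableEq V] {p : V × V → ℝ}

def liveExpect (F : Finset (V × V)) (p : V × V → ℝ) (φ : Finset (V × V) → ℝ) : ℝ :=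
  ∑ g ∈ F.powerset, liveProb F p g * φ g

theorem liveProb_nonneg (hp : ∀ e, 0 ≤ p e ∧ p e ≤ 1) (F g : Finset (V × V)) :
    0 ≤ liveProb F p g :=
  mul_nonneg (Finset.prod_nonneg fun e _ => (hp e).1)
    (Finset.prod_nonneg fun e _ => sub_nonneg.2 (hp e).2)

theorem liveExpect_const (F : Finset (V × V)) (p : V × V → ℝ) (c : ℝ) :
    liveExpect F p (fun _ => c) = c := by
  have hsum : ∑ g ∈ F.powerset, liveProb F p g = 1 := by
    simpa [liveProb] using (Finset.prod_add p (fun e => 1 - p e) F).symm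
  rw [liveExpect, ← Finset.sum_mul, hsum, one_mul]

theorem liveExpect_mono (hp : ∀ e, 0 ≤ p e ∧ p e ≤ 1) {F : Finset (V × V)}
    {φ ψ : Finset (V × V) → ℝ} (hφψ : ∀ g ⊆ F, φ g ≤ ψ g) :
    liveExpect F p φ ≤ liveExpect F p ψ :=
  Finset.sum_le_sum fun g hg => mul_le_mul_of_nonneg_left
    (hφψ g (Finset.mem_powerset.1 hg)) (liveProb_nonneg hp F g)

theorem liveProb_insert_of_notMem {F g : Finset (V × V)} {e : V × V} (he : e ∉ F)
    (hg : g ⊆ F) : liveProb (insert e F) p g = (1 - p e) * liveProb F p g := by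
  rw [liveProb, liveProb, Finset.insert_sdiff_of_notMem _ (fun h => he (hg h)),
    Finset.prod_insert (fun h => he (Finset.mem_sdiff.1 h).1)]
  ring

theorem liveProb_insert_insert_of_notMem {F g : Finset (V × V)} {e : V × V} (he : e ∉ F)
    (hg : g ⊆ F) : liveProb (insert e F) p (insert e g) = p e * liveProb F p g := by
  rw [liveProb, liveProb, Finset.insert_sdiff_insert, Finset.sdiff_insert_of_notMem he,
    Finset.prod_insert (fun h => he (hg h))]
  ring

theorem liveExpect_insert {F : Finset (V × V)} {e : V × V} (he : e ∉ F)
    (φ : Finset (V × V) → ℝ) :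
    liveExpect (insert e F) p φ =
      liveExpect F p (fun g => p e * φ (insert e g) + (1 - p e) * φ g) := by
  rw [liveExpect, Finset.sum_powerset_insert he, liveExpect, ← Finset.sum_add_distrib,
    Finset.sum_congr rfl]
  intro g hg
  rw [liveProb_insert_of_notMem he (Finset.mem_powerset.1 hg),
    liveProb_insert_insert_of_notMem he (Finset.mem_powerset.1 hg)]
  ring

theorem liveExpect_union {F D : Finset (V × V)} (hFD : Disjoint F D) (φ : Finset (V × V) → ℝ) :
    liveExpect (F ∪ D) p φ =
      liveExpect F p (fun g => liveExpect D p (fun h => φ (g ∪ h))) := by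
  induction D using Finset.induction_on generalizing φ with
  | empty => simp [liveExpect, liveProb]
  | @insert a D ha ih =>
    rw [Finset.disjoint_insert_right] at hFD
    rw [Finset.union_insert, liveExpect_insert (by simp [hFD.1, ha]), ih hFD.2]
    congr! 2 with g
    rw [liveExpect_insert ha]
    simp only [Finset.union_insert]

theorem expSpread_insert_sub (F : Finset (V × V)) (p : V × V → ℝ) (S : Finset V) {e : V × V}
    (he : e ∉ F) :
    expSpread (insert e F) p S - expSpread F p S = p e * liveExpect F p (marginalGain S e) := by
  have hspread : ∀ F, expSpread F p S = liveExpect F p (fun g => (Reach S g).ncard) :=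
    fun _ => rfl
  rw [hspread, hspread, liveExpect_insert he, liveExpect, liveExpect, liveExpect,
    ← Finset.sum_sub_distrib, Finset.mul_sum]
  refine Finset.sum_congr rfl fun g _ => ?_
  rw [marginalGain]
  ring

end LiveExpect

theorem augmented_spread_submodular_general {V : Type*} [DecidableEq V]
    (E : Finset (V × V)) (p : V × V → ℝ)
    (hp : ∀ e, 0 ≤ p e ∧ p e ≤ 1)
    (S : Finset V) (EC : Finset (V × V))
    (hEC : ∀ e ∈ EC, e.1 ∈ S ∧ e ∉ E) :
    ∀ A B : Finset (V × V), A ⊆ B → B ⊆ EC → ∀ e ∈ EC, e ∉ B →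
      expSpread (E ∪ (B ∪ {e})) p S - expSpread (E ∪ B) p S ≤
        expSpread (E ∪ (A ∪ {e})) p S - expSpread (E ∪ A) p S := by
  intro A B hAB hBEC e he heB
  obtain ⟨heS, heE⟩ := hEC e he
  have hinsert : ∀ X, E ∪ (X ∪ {e}) = insert e (E ∪ X) := fun X => by
    rw [← Finset.union_assoc, Finset.union_comm, Finset.insert_eq]
  have hsplit : E ∪ B = (E ∪ A) ∪ (B \ A) := by
    rw [Finset.union_assoc, Finset.union_sdiff_of_subset hAB]
  have hdisj : Disjoint (E ∪ A) (B \ A) :=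
    Finset.disjoint_union_left.2 ⟨Finset.disjoint_left.2 fun x hxE hxBA =>
      (hEC x (hBEC (Finset.mem_sdiff.1 hxBA).1)).2 hxE, Finset.disjoint_sdiff⟩
  rw [hinsert, hinsert, expSpread_insert_sub _ _ _ (by simp [heE, heB]),
    expSpread_insert_sub _ _ _ (by simp [heE, show e ∉ A from fun h => heB (hAB h)]), hsplit,
    liveExpect_union hdisj]
  refine mul_le_mul_of_nonneg_left (liveExpect_mono hp fun g _ => ?_) (hp e).1
  calc liveExpect (B \ A) p (fun h => marginalGain S e (g ∪ h))
      ≤ liveExpect (B \ A) p (fun _ => marginalGain S e g) :=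
        liveExpect_mono hp fun h hh => marginalGain_union_le heS fun a ha =>
          (hEC a (hBEC (Finset.mem_sdiff.1 (hh ha)).1)).1
    _ = marginalGain S e g := liveExpect_const _ _ _

/-- Submodularity of the augmented influence spread in the added edge set: for
`A ⊆ B ⊆ E_C` with `E_C ⊆ (S × V) ∖ E` and `e ∈ E_C ∖ B`,
`σ(A ∪ {e}, S) − σ(A, S) ≥ σ(B ∪ {e}, S) − σ(B, S)`. -/
theorem augmented_spread_submodular {V : Type*} [Fintype V] [DecidableEq V]
    (E : Finset (V × V)) (p : V × V → ℝ)
    (hp : ∀ e, 0 ≤ p e ∧ p e ≤ 1)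
    (S : Finset V) (EC : Finset (V × V))
    (hEC : ∀ e ∈ EC, e.1 ∈ S ∧ e ∉ E) :
    ∀ A B : Finset (V × V), A ⊆ B → B ⊆ EC → ∀ e ∈ EC, e ∉ B →
      expSpread (E ∪ (B ∪ {e})) p S - expSpread (E ∪ B) p S ≤
        expSpread (E ∪ (A ∪ {e})) p S - expSpread (E ∪ A) p S :=
  augmented_spread_submodular_general E p hp S EC hEC
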